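/- Let β ∈ (0,1), h > 0, and let S₁ be a positive-integer-valued random variable with increasing hazard rate μ₁ (IHR). Fix a constant A with 0 ≤ (1−β)A ≤ 1. Define D(n) = ∑_{i=0}^{∞} β^i p̄₁(i|n) (1 + β μ₁(n+i) A) and w₁(n) = h (1/(1−β) − D(n)) / D(n). Then D(n) is decreasing in n and hence w₁(n) is increasing in n. -/
import Mathlib


open MeasureTheory Filter

set_option linter.unusedSectionVars false
set_option linter.unusedVariables false

/-- Survival probability `P(S ≥ n+1)`. -/
noncomputable def surv {Ω : Type*} [MeasurableSpace Ω] (P : Measure Ω) (S : Ω → ℕ) (n : ℕ) : ℝ :=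
  (P {ω | n + 1 ≤ S ω}).toReal

/-- Discrete hazard rate `μ(n) = P(S = n+1 | S ≥ n+1)`. -/
noncomputable def haz {Ω : Type*} [MeasurableSpace Ω] (P : Measure Ω) (S : Ω → ℕ) (n : ℕ) : ℝ :=
  (P {ω | S ω = n + 1}).toReal / surv P S n

/-- Conditional survival probability `p̄(i|n) = P(S ≥ n+i+1 | S ≥ n+1)`. -/
noncomputable def pbar {Ω : Type*} [MeasurableSpace Ω] (P : Measure Ω) (S : Ω → ℕ)
    (i n : ℕ) : ℝ :=
  surv P S (n + i) / surv P S n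

/-- `D(n) = ∑ β^i p̄₁(i|n)(1 + β μ₁(n+i) A)`. -/
noncomputable def Dfun {Ω : Type*} [MeasurableSpace Ω] (P : Measure Ω) (S : Ω → ℕ)
    (β A : ℝ) (n : ℕ) : ℝ :=
  ∑' i : ℕ, β ^ i * pbar P S i n * (1 + β * haz P S (n + i) * A)

section Aux
variable {Ω : Type*} [MeasurableSpace Ω] {P : Measure Ω} [IsProbabilityMeasure P]
  {S : Ω → ℕ}

lemma surv_nonneg (n : ℕ) : 0 ≤ surv P S n := ENNReal.toReal_nonneg

lemma surv_split (hS : Measurable S) (n : ℕ) :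
    surv P S n = (P {ω | S ω = n + 1}).toReal + surv P S (n + 1) := by
  unfold surv
  rw [← ENNReal.toReal_add (measure_ne_top _ _) (measure_ne_top _ _)]
  congr 1
  have hset : {ω | n + 1 ≤ S ω} = {ω | S ω = n + 1} ∪ {ω | n + 1 + 1 ≤ S ω} := by
    ext ω; simp only [Set.mem_setOf_eq, Set.mem_union]; omega
  rw [hset, measure_union]
  · rw [Set.disjoint_left]; intro ω h1 h2; simp only [Set.mem_setOf_eq] at h1 h2; omega
  · exact measurableSet_le measurable_const hS

lemma surv_succ_le (hS : Measurable S) (n : ℕ) : surv P S (n + 1) ≤ surv P S n := by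
  have := surv_split hS (P := P) n
  have h0 : (0:ℝ) ≤ (P {ω | S ω = n + 1}).toReal := ENNReal.toReal_nonneg
  linarith

lemma haz_nonneg (n : ℕ) : 0 ≤ haz P S n :=
  div_nonneg ENNReal.toReal_nonneg (surv_nonneg n)

lemma haz_le_one (hS : Measurable S) (hpos : ∀ n, 0 < surv P S n) (n : ℕ) :
    haz P S n ≤ 1 := by
  rw [haz, div_le_one (hpos n)]
  have := surv_split hS (P := P) n
  have := surv_nonneg (P := P) (S := S) (n + 1)
  linarith

lemma one_sub_haz (hS : Measurable S) (hpos : ∀ n, 0 < surv P S n) (n : ℕ) :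
    1 - haz P S n = surv P S (n + 1) / surv P S n := by
  have hsp := surv_split hS (P := P) n
  rw [haz, eq_div_iff (hpos n).ne', sub_mul, div_mul_cancel₀ _ (hpos n).ne', one_mul]
  linarith

lemma pbar_succ (hS : Measurable S) (hpos : ∀ n, 0 < surv P S n) (i n : ℕ) :
    pbar P S (i + 1) n = (1 - haz P S (n + i)) * pbar P S i n := by
  rw [one_sub_haz hS hpos, pbar, pbar]
  rw [div_mul_div_comm, div_eq_div_iff (hpos n).ne' (mul_ne_zero (hpos (n+i)).ne' (hpos n).ne')]
  show surv P S (n + i + 1) * _ = _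
  ring

lemma pbar_nonneg (hpos : ∀ n, 0 < surv P S n) (i n : ℕ) : 0 ≤ pbar P S i n :=
  div_nonneg (surv_nonneg _) (surv_nonneg _)

lemma pbar_zero (hpos : ∀ n, 0 < surv P S n) (n : ℕ) : pbar P S 0 n = 1 := by
  simp [pbar, div_self (hpos n).ne']

lemma pbar_le_one (hS : Measurable S) (hpos : ∀ n, 0 < surv P S n) (i n : ℕ) :
    pbar P S i n ≤ 1 := by
  rw [pbar, div_le_one (hpos n)]
  induction i with
  | zero => simp
  | succ k ih => exact (surv_succ_le hS (n + k)).trans ih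

lemma pbar_anti (hS : Measurable S) (hpos : ∀ n, 0 < surv P S n)
    (hIHR : ∀ n, haz P S n ≤ haz P S (n + 1)) (i n : ℕ) :
    pbar P S i (n + 1) ≤ pbar P S i n := by
  induction i with
  | zero => rw [pbar_zero hpos, pbar_zero hpos]
  | succ k ih =>
      rw [pbar_succ hS hpos, pbar_succ hS hpos]
      have h1 : haz P S (n + k) ≤ haz P S (n + 1 + k) := by
        have := hIHR (n + k)
        have heq : n + 1 + k = n + k + 1 := by omega
        rw [heq]; exact this
      have h2 : haz P S (n + 1 + k) ≤ 1 := haz_le_one hS hpos _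
      have h3 : 0 ≤ haz P S (n + k) := haz_nonneg _
      exact mul_le_mul (by linarith) ih (pbar_nonneg hpos _ _) (by linarith)

end Aux

section Aux2
variable {Ω : Type*} [MeasurableSpace Ω] {P : Measure Ω} [IsProbabilityMeasure P]
  {S : Ω → ℕ} {β A : ℝ}

lemma summable_T (hS : Measurable S) (hpos : ∀ n, 0 < surv P S n)
    (hβ : β ∈ Set.Ioo (0:ℝ) 1) (n : ℕ) :
    Summable (fun i => β ^ i * pbar P S i n) := by
  apply Summable.of_nonneg_of_le
    (fun i => mul_nonneg (pow_nonneg hβ.1.le i) (pbar_nonneg hpos i n))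
    (fun i => ?_) (summable_geometric_of_lt_one hβ.1.le hβ.2)
  calc β ^ i * pbar P S i n ≤ β ^ i * 1 := by
        exact mul_le_mul_of_nonneg_left (pbar_le_one hS hpos i n) (pow_nonneg hβ.1.le i)
    _ = β ^ i := mul_one _

lemma summable_D (hS : Measurable S) (hpos : ∀ n, 0 < surv P S n)
    (hβ : β ∈ Set.Ioo (0:ℝ) 1) (hA : 0 ≤ A) (n : ℕ) :
    Summable (fun i => β ^ i * pbar P S i n * (1 + β * haz P S (n + i) * A)) := by
  have hfac : ∀ i, 0 ≤ 1 + β * haz P S (n + i) * A := fun i => by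
    have h4 := haz_nonneg (P := P) (S := S) (n + i)
    have := mul_nonneg (mul_nonneg hβ.1.le h4) hA
    linarith
  apply Summable.of_nonneg_of_le
    (fun i => mul_nonneg (mul_nonneg (pow_nonneg hβ.1.le i) (pbar_nonneg hpos i n)) (hfac i))
    (fun i => ?_) ((summable_geometric_of_lt_one hβ.1.le hβ.2).mul_left (1 + β * A))
  have h1 : pbar P S i n ≤ 1 := pbar_le_one hS hpos i n
  have h2 : haz P S (n + i) ≤ 1 := haz_le_one hS hpos _
  have h3 : 0 ≤ pbar P S i n := pbar_nonneg hpos i n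
  have h4 : 0 ≤ haz P S (n + i) := haz_nonneg _
  have h5 : (0:ℝ) ≤ β ^ i := pow_nonneg hβ.1.le i
  have e0 : 1 + β * haz P S (n + i) * A ≤ 1 + β * A := by
    nlinarith [mul_nonneg (mul_nonneg hβ.1.le hA) (sub_nonneg.2 h2)]
  have e1 : pbar P S i n * (1 + β * haz P S (n + i) * A) ≤ 1 + β * A := by
    calc pbar P S i n * (1 + β * haz P S (n + i) * A)
        ≤ 1 * (1 + β * A) := mul_le_mul h1 e0 (hfac i) one_pos.le
      _ = 1 + β * A := one_mul _
  calc β ^ i * pbar P S i n * (1 + β * haz P S (n + i) * A)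
      = β ^ i * (pbar P S i n * (1 + β * haz P S (n + i) * A)) := by ring
    _ ≤ β ^ i * (1 + β * A) := mul_le_mul_of_nonneg_left e1 h5
    _ = (1 + β * A) * β ^ i := by ring

lemma Dfun_eq (hS : Measurable S) (hpos : ∀ n, 0 < surv P S n)
    (hβ : β ∈ Set.Ioo (0:ℝ) 1) (n : ℕ) :
    Dfun P S β A n = A + (1 - (1 - β) * A) * ∑' i, β ^ i * pbar P S i n := by
  set g : ℕ → ℝ := fun i => β ^ i * pbar P S i n with hgdef
  have hg : Summable g := summable_T hS hpos hβ n
  have hg1 : Summable (fun i => g (i + 1)) := (summable_nat_add_iff 1).mpr hg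
  have hpt : ∀ i, β ^ i * pbar P S i n * (1 + β * haz P S (n + i) * A)
      = (1 + A * β) * g i - A * g (i + 1) := by
    intro i
    have := pbar_succ hS hpos i n
    simp only [hgdef, this, pow_succ]
    ring
  have hzero : g 0 = 1 := by simp [hgdef, pbar_zero hpos]
  have hsplit : ∑' i, g (i + 1) = (∑' i, g i) - 1 := by
    have := Summable.tsum_eq_zero_add hg
    rw [hzero] at this
    linarith
  rw [Dfun]
  calc (∑' i, β ^ i * pbar P S i n * (1 + β * haz P S (n + i) * A))
      = ∑' i, ((1 + A * β) * g i - A * g (i + 1)) := by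
        exact tsum_congr hpt
    _ = (1 + A * β) * (∑' i, g i) - A * ((∑' i, g i) - 1) := by
        rw [Summable.tsum_sub (hg.mul_left _) (hg1.mul_left _), tsum_mul_left, tsum_mul_left, hsplit]
    _ = A + (1 - (1 - β) * A) * ∑' i, g i := by ring

end Aux2

/-- For IHR `S₁` and `0 ≤ (1−β)A ≤ 1`, `D(n)` is decreasing in `n`, hence
`w₁(n) = h(1/(1−β) − D(n))/D(n)` is increasing in `n`. -/
theorem IHR_Dfun_antitone_w1_monotone {Ω : Type*} [MeasurableSpace Ω] (P : Measure Ω)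
    [IsProbabilityMeasure P] (S : Ω → ℕ) (hS : Measurable S) (hS1 : ∀ ω, 1 ≤ S ω)
    (β h A : ℝ) (hβ : β ∈ Set.Ioo (0:ℝ) 1) (hh : 0 < h)
    (hA0 : 0 ≤ (1 - β) * A) (hA1 : (1 - β) * A ≤ 1)
    (hpos : ∀ n, 0 < surv P S n)
    (hIHR : ∀ n, haz P S n ≤ haz P S (n + 1)) :
    Antitone (fun n => Dfun P S β A n) ∧
    Monotone (fun n => h * (1 / (1 - β) - Dfun P S β A n) / Dfun P S β A n) := by
  have hb1 : (0:ℝ) < 1 - β := by linarith [hβ.2]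
  have hA' : 0 ≤ A := by nlinarith
  have hc : 0 ≤ 1 - (1 - β) * A := by linarith
  -- T is antitone
  have hT : ∀ n, (∑' i, β ^ i * pbar P S i (n + 1)) ≤ ∑' i, β ^ i * pbar P S i n := by
    intro n
    refine Summable.tsum_le_tsum (fun i => ?_) (summable_T hS hpos hβ (n + 1)) (summable_T hS hpos hβ n)
    exact mul_le_mul_of_nonneg_left (pbar_anti hS hpos hIHR i n) (pow_nonneg hβ.1.le i)
  have hT1 : ∀ n, (1:ℝ) ≤ ∑' i, β ^ i * pbar P S i n := by
    intro n
    have := Summable.le_tsum (summable_T hS hpos hβ n) 0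
      (fun j _ => mul_nonneg (pow_nonneg hβ.1.le j) (pbar_nonneg hpos j n))
    simpa [pbar_zero hpos] using this
  have hanti : Antitone (fun n => Dfun P S β A n) := by
    apply antitone_nat_of_succ_le
    intro n
    rw [Dfun_eq hS hpos hβ, Dfun_eq hS hpos hβ]
    have := mul_le_mul_of_nonneg_left (hT n) hc
    linarith
  have hDpos : ∀ n, 0 < Dfun P S β A n := by
    intro n
    rw [Dfun_eq hS hpos hβ]
    nlinarith [hT1 n, hβ.1]
  refine ⟨hanti, ?_⟩
  intro m n hmn
  have hD : Dfun P S β A n ≤ Dfun P S β A m := hanti hmn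
  have hcpos : (0:ℝ) < 1 / (1 - β) := by positivity
  simp only
  rw [div_le_div_iff₀ (hDpos m) (hDpos n)]
  nlinarith [mul_nonneg (mul_pos hh hcpos).le (sub_nonneg.2 hD)]
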